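/- Let X be a nonempty finite set, let ∅ ≠ A ⊆ B ⊆ 2^X with ∅ ∉ A (so that ⟨A⟩ is a nontrivial upper set), and let p ∈ (0,1). If p > 8 · q(⟨A⟩) · log₂(2 ℓ_0(⟨A⟩)), then P(X_p ∈ A | X_p ∈ B) > (1/2) · r_{A,B}(p). -/

import Mathlib

open Finset

noncomputable section

/-- Product measure weight of a single subset `S` of the finite type `X`. -/
def mu {X : Type*} [Fintype X] [DecidableEq X] (p : ℝ) (S : Finset X) : ℝ :=
  p ^ S.card * (1 - p) ^ (Fintype.card X - S.card)

/-- Measure of a family of subsets. -/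
def muF {X : Type*} [Fintype X] [DecidableEq X] (p : ℝ) (F : Finset (Finset X)) : ℝ :=
  ∑ S ∈ F, mu p S

/-- `F` is an upper set (increasing family) in `2^X`. -/
def IsUpperFam {X : Type*} [Fintype X] [DecidableEq X] (F : Finset (Finset X)) : Prop :=
  ∀ S ∈ F, ∀ T : Finset X, S ⊆ T → T ∈ F

/-- `G` is a cover of `F`: every member of `F` contains a member of `G`. -/
def IsCover {X : Type*} [Fintype X] [DecidableEq X] (G F : Finset (Finset X)) : Prop :=
  ∀ S ∈ F, ∃ T ∈ G, T ⊆ S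

/-- `F` is `p`-small. -/
def PSmall {X : Type*} [Fintype X] [DecidableEq X] (p : ℝ) (F : Finset (Finset X)) : Prop :=
  ∃ G : Finset (Finset X), IsCover G F ∧ ∑ T ∈ G, p ^ T.card ≤ 1 / 2

/-- Expectation threshold: the largest `p ∈ [0,1]` for which `F` is `p`-small. -/
def qThr {X : Type*} [Fintype X] [DecidableEq X] (F : Finset (Finset X)) : ℝ :=
  sSup {p : ℝ | p ∈ Set.Icc (0 : ℝ) 1 ∧ PSmall p F}

/-- The set of minimal elements of `F` (under inclusion). -/
def minimalsF {X : Type*} [Fintype X] [DecidableEq X] (F : Finset (Finset X)) :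
    Finset (Finset X) :=
  F.filter fun S => ∀ T ∈ F, T ⊆ S → T = S

/-- `ℓ₀(F)`: maximum size of a minimal element of `F`. -/
def ell0 {X : Type*} [Fintype X] [DecidableEq X] (F : Finset (Finset X)) : ℕ :=
  (minimalsF F).sup Finset.card

/-- `ℓ(F) = max (ℓ₀(F), 2)`. -/
def ell {X : Type*} [Fintype X] [DecidableEq X] (F : Finset (Finset X)) : ℕ :=
  max (ell0 F) 2

/-- The upper set generated by a family `A`. -/
def upClos {X : Type*} [Fintype X] [DecidableEq X] (A : Finset (Finset X)) :
    Finset (Finset X) :=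
  Finset.univ.filter fun T => ∃ S ∈ A, S ⊆ T

/-- The ratio `r_{A,B}(p) = (μ_p(A)/μ_p(⟨A⟩)) / μ_p(B)`. -/
def rAB {X : Type*} [Fintype X] [DecidableEq X] (A B : Finset (Finset X)) (p : ℝ) : ℝ :=
  (muF p A / muF p (upClos A)) / muF p B

end

namespace PP
set_option linter.unusedSectionVars false
set_option linter.unusedVariables false

variable {X : Type*} [Fintype X] [DecidableEq X]

lemma mu_nonneg {p : ℝ} (h0 : 0 ≤ p) (h1 : p ≤ 1) (S : Finset X) : 0 ≤ mu p S := by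
  have : (0:ℝ) ≤ 1 - p := by linarith
  exact mul_nonneg (pow_nonneg h0 _) (pow_nonneg this _)

lemma mu_pos {p : ℝ} (h0 : 0 < p) (h1 : p < 1) (S : Finset X) : 0 < mu p S := by
  have : (0:ℝ) < 1 - p := by linarith
  exact mul_pos (pow_pos h0 _) (pow_pos this _)

lemma sum_mu (p : ℝ) : ∑ S : Finset X, mu p S = 1 := by
  have h := Finset.prod_add (fun _ : X => p) (fun _ : X => 1 - p) Finset.univ
  simp only [prod_const, Finset.card_univ_diff] at h
  have h1 : p + (1 - p) = 1 := by ring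
  rw [h1, one_pow] at h
  rw [show (Finset.univ : Finset (Finset X)) = Finset.univ.powerset from (Finset.powerset_univ).symm]
  exact h.symm

lemma muF_nonneg {p : ℝ} (h0 : 0 ≤ p) (h1 : p ≤ 1) (F : Finset (Finset X)) : 0 ≤ muF p F :=
  Finset.sum_nonneg fun S _ => mu_nonneg h0 h1 S

lemma muF_pos {p : ℝ} (h0 : 0 < p) (h1 : p < 1) {F : Finset (Finset X)} (hF : F.Nonempty) :
    0 < muF p F :=
  Finset.sum_pos (fun S _ => mu_pos h0 h1 S) hF

lemma muF_mono {p : ℝ} (h0 : 0 ≤ p) (h1 : p ≤ 1) {F G : Finset (Finset X)} (h : F ⊆ G) :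
    muF p F ≤ muF p G :=
  Finset.sum_le_sum_of_subset_of_nonneg h (fun S _ _ => mu_nonneg h0 h1 S)

lemma muF_compl (p : ℝ) (F : Finset (Finset X)) :
    muF p (Finset.univ \ F) = 1 - muF p F := by
  have h : muF p (Finset.univ \ F) + muF p F = 1 := by
    rw [muF, muF, Finset.sum_sdiff (Finset.subset_univ F)]
    exact sum_mu p
  linarith

lemma mu_zero (S : Finset X) : mu 0 S = if S = ∅ then 1 else 0 := by
  unfold mu
  by_cases h : S = ∅
  · simp [h]
  · have : S.card ≠ 0 := by simpa [Finset.card_eq_zero] using h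
    simp [h, zero_pow this]

lemma muF_zero (F : Finset (Finset X)) : muF 0 F = if ∅ ∈ F then 1 else 0 := by
  unfold muF
  rw [Finset.sum_congr rfl (fun S _ => mu_zero S)]
  exact Finset.sum_ite_eq' F ∅ (fun _ => 1)



lemma binom_one (b : ℝ) (W : Finset X) :
    ∑ C ∈ W.powerset, b ^ C.card * (1 - b) ^ (W.card - C.card) = 1 := by
  have h := Finset.prod_add (fun _ : X => b) (fun _ : X => 1 - b) W
  simp only [prod_const] at h
  have h1 : b + (1 - b) = 1 := by ring
  rw [h1, one_pow] at h
  rw [show ∑ C ∈ W.powerset, b ^ C.card * (1 - b) ^ (W.card - C.card)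
      = ∑ C ∈ W.powerset, b ^ C.card * (1 - b) ^ ((W \ C).card) from
    Finset.sum_congr rfl (fun C hC => by
      rw [Finset.card_sdiff_of_subset (Finset.mem_powerset.mp hC)])]
  exact h.symm

lemma binom_pow (a g : ℝ) (U : Finset X) :
    ∑ W ∈ U.powerset, a ^ W.card * g ^ (U.card - W.card) = (a + g) ^ U.card := by
  have h := Finset.prod_add (fun _ : X => a) (fun _ : X => g) U
  simp only [prod_const] at h
  rw [show ∑ W ∈ U.powerset, a ^ W.card * g ^ (U.card - W.card)
      = ∑ W ∈ U.powerset, a ^ W.card * g ^ ((U \ W).card) from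
    Finset.sum_congr rfl (fun C hC => by
      rw [Finset.card_sdiff_of_subset (Finset.mem_powerset.mp hC)])]
  exact h.symm

lemma conv_pointwise (a b : ℝ) (U : Finset X) :
    ∑ x ∈ ((Finset.univ ×ˢ Finset.univ : Finset (Finset X × Finset X)).filter
        (fun x => x.1 ∪ x.2 = U)), mu a x.1 * mu b x.2 = mu (a + b - a * b) U := by
  classical
  set n := Fintype.card X with hn
  have key : ∑ y ∈ U.powerset.sigma (fun W => W.powerset),
        mu a y.1 * mu b ((U \ y.1) ∪ y.2)
      = ∑ x ∈ ((Finset.univ ×ˢ Finset.univ : Finset (Finset X × Finset X)).filter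
        (fun x => x.1 ∪ x.2 = U)), mu a x.1 * mu b x.2 := by
    refine Finset.sum_nbij' (fun y => (y.1, (U \ y.1) ∪ y.2)) (fun x => ⟨x.1, x.2 ∩ x.1⟩)
      ?_ ?_ ?_ ?_ ?_
    · intro y hy
      simp only [Finset.mem_sigma, Finset.mem_powerset] at hy
      simp only [Finset.mem_filter, Finset.mem_product]
      refine ⟨⟨Finset.mem_univ _, Finset.mem_univ _⟩, ?_⟩
      rw [← Finset.union_assoc, Finset.union_sdiff_of_subset hy.1,
        Finset.union_eq_left.mpr (hy.2.trans (hy.1))]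
    · intro x hx
      simp only [Finset.mem_filter, Finset.mem_product] at hx
      simp only [Finset.mem_sigma, Finset.mem_powerset]
      exact ⟨hx.2 ▸ Finset.subset_union_left, Finset.inter_subset_right⟩
    · rintro ⟨W, C⟩ hy
      simp only [Finset.mem_sigma, Finset.mem_powerset] at hy
      have h1 : ((U \ W) ∪ C) ∩ W = C := by
        rw [Finset.union_inter_distrib_right, Finset.sdiff_inter_self,
          Finset.empty_union, Finset.inter_eq_left.mpr hy.2]
      dsimp only
      rw [h1]
    · rintro ⟨W, V⟩ hx
      simp only [Finset.mem_filter, Finset.mem_product] at hx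
      have h2 : U \ W = V \ W := by rw [← hx.2, Finset.union_sdiff_left]
      have h3 : (U \ W) ∪ (V ∩ W) = V := by
        rw [h2, Finset.sdiff_union_inter]
      dsimp only
      rw [h3]
    · intro y hy; rfl
  rw [← key, Finset.sum_sigma]
  have hinner : ∀ W ∈ U.powerset,
      (∑ C ∈ W.powerset, mu a W * mu b ((U \ W) ∪ C))
        = mu a W * (b ^ (U.card - W.card) * (1 - b) ^ (n - U.card)) := by
    intro W hW
    have hWU : W ⊆ U := Finset.mem_powerset.mp hW
    rw [← Finset.mul_sum]
    congr 1
    have : ∀ C ∈ W.powerset, mu b ((U \ W) ∪ C)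
        = (b ^ (U.card - W.card) * (1 - b) ^ (n - U.card))
          * (b ^ C.card * (1 - b) ^ (W.card - C.card)) := by
      intro C hC
      have hCW : C ⊆ W := Finset.mem_powerset.mp hC
      have hdisj : Disjoint (U \ W) C :=
        (Finset.sdiff_disjoint).mono_right hCW
      have hcard : ((U \ W) ∪ C).card = (U.card - W.card) + C.card := by
        rw [Finset.card_union_of_disjoint hdisj, Finset.card_sdiff_of_subset hWU]
      have hWle : W.card ≤ U.card := Finset.card_le_card hWU
      have hUle : U.card ≤ n := Finset.card_le_univ U
      have hCle : C.card ≤ W.card := Finset.card_le_card hCW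
      have hexp : n - ((U.card - W.card) + C.card)
          = (n - U.card) + (W.card - C.card) := by omega
      rw [mu, hcard, hexp, pow_add, pow_add]
      ring
    rw [Finset.sum_congr rfl this, ← Finset.mul_sum, binom_one, mul_one]
  rw [Finset.sum_congr rfl hinner]
  have houter : ∀ W ∈ U.powerset,
      mu a W * (b ^ (U.card - W.card) * (1 - b) ^ (n - U.card))
      = ((1-a)^(n - U.card) * (1-b)^(n - U.card))
        * (a ^ W.card * ((1-a)*b) ^ (U.card - W.card)) := by
    intro W hW
    have hWU : W ⊆ U := Finset.mem_powerset.mp hW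
    have hWle : W.card ≤ U.card := Finset.card_le_card hWU
    have hUle : U.card ≤ n := Finset.card_le_univ U
    have hexp : n - W.card = (n - U.card) + (U.card - W.card) := by omega
    rw [mu, hexp, pow_add, mul_pow]
    ring
  rw [Finset.sum_congr rfl houter, ← Finset.mul_sum, binom_pow]
  have h1 : a + (1 - a) * b = a + b - a * b := by ring
  have h2 : (1-a)^(n - U.card) * (1-b)^(n - U.card) = (1 - (a + b - a*b))^(n - U.card) := by
    rw [← mul_pow]; congr 1; ring
  rw [h1, h2, mu]
  ring



def wgt (p₀ : ℝ) {j : ℕ} (ω : Fin j → Finset X) : ℝ := ∏ i, mu p₀ (ω i)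

def Un {j : ℕ} (ω : Fin j → Finset X) : Finset X := Finset.univ.biUnion ω

lemma Un_cons {j : ℕ} (W : Finset X) (ρ : Fin j → Finset X) :
    Un (Fin.cons W ρ) = W ∪ Un ρ := by
  ext x
  simp only [Un, Finset.mem_biUnion, Finset.mem_univ, true_and, Finset.mem_union]
  constructor
  · rintro ⟨i, hi⟩
    rcases Fin.eq_zero_or_eq_succ i with h | ⟨i', rfl⟩
    · left; rwa [h, Fin.cons_zero] at hi
    · right; exact ⟨i', by rwa [Fin.cons_succ] at hi⟩
  · rintro (h | ⟨i, hi⟩)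
    · exact ⟨0, by rwa [Fin.cons_zero]⟩
    · exact ⟨i.succ, by rwa [Fin.cons_succ]⟩

lemma wgt_cons (p₀ : ℝ) {j : ℕ} (W : Finset X) (ρ : Fin j → Finset X) :
    wgt p₀ (Fin.cons W ρ) = mu p₀ W * wgt p₀ ρ := by
  unfold wgt
  rw [Fin.prod_univ_succ]
  simp [Fin.cons_zero, Fin.cons_succ]

lemma sum_pi_split {j : ℕ} (f : (Fin (j+1) → Finset X) → ℝ) :
    ∑ ω : Fin (j+1) → Finset X, f ω
      = ∑ W : Finset X, ∑ ρ : Fin j → Finset X, f (Fin.cons W ρ) := by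
  rw [← Equiv.sum_comp (Fin.consEquiv (fun _ => Finset X)) f, Fintype.sum_prod_type]
  rfl

lemma muF_filter (b : ℝ) (P : Finset X → Prop) [DecidablePred P] :
    muF b (Finset.univ.filter P) = ∑ V : Finset X, mu b V * (if P V then 1 else 0) := by
  unfold muF
  rw [Finset.sum_filter]
  apply Finset.sum_congr rfl
  intro V _
  by_cases h : P V <;> simp [h]

lemma conv_step (a b : ℝ) (Fam : Finset (Finset X)) :
    ∑ W : Finset X, mu a W *
      (∑ V : Finset X, mu b V * (if V ∪ W ∈ Fam then 1 else 0))
    = muF (a + b - a * b) Fam := by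
  classical
  have lhs_eq : ∑ W : Finset X, mu a W *
      (∑ V : Finset X, mu b V * (if V ∪ W ∈ Fam then 1 else 0))
      = ∑ x ∈ (Finset.univ ×ˢ Finset.univ : Finset (Finset X × Finset X)),
          mu a x.1 * mu b x.2 * (if x.1 ∪ x.2 ∈ Fam then 1 else 0) := by
    rw [Finset.sum_product]
    apply Finset.sum_congr rfl; intro W _
    rw [Finset.mul_sum]
    apply Finset.sum_congr rfl; intro V _
    rw [Finset.union_comm V W]; ring
  rw [lhs_eq]
  rw [← Finset.sum_fiberwise (Finset.univ ×ˢ Finset.univ) (fun x => x.1 ∪ x.2)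
    (fun x => mu a x.1 * mu b x.2 * (if x.1 ∪ x.2 ∈ Fam then 1 else 0))]
  have key : ∀ U : Finset X,
      (∑ x ∈ (Finset.univ ×ˢ Finset.univ : Finset (Finset X × Finset X)).filter
        (fun x => x.1 ∪ x.2 = U), mu a x.1 * mu b x.2 * (if x.1 ∪ x.2 ∈ Fam then 1 else 0))
      = mu (a + b - a * b) U * (if U ∈ Fam then 1 else 0) := by
    intro U
    have h1 : ∀ x ∈ (Finset.univ ×ˢ Finset.univ : Finset (Finset X × Finset X)).filter
        (fun x => x.1 ∪ x.2 = U),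
        mu a x.1 * mu b x.2 * (if x.1 ∪ x.2 ∈ Fam then 1 else 0)
        = mu a x.1 * mu b x.2 * (if U ∈ Fam then 1 else 0) := by
      intro x hx
      rw [(Finset.mem_filter.mp hx).2]
    rw [Finset.sum_congr rfl h1, ← Finset.sum_mul, conv_pointwise]
  rw [Finset.sum_congr rfl (fun U _ => key U)]
  simp only [mul_ite, mul_one, mul_zero]
  rw [Finset.sum_ite_mem, Finset.univ_inter]
  rfl

lemma unionDist (p₀ : ℝ) :
    ∀ (j : ℕ) (Fam : Finset (Finset X)),
      ∑ ω : Fin j → Finset X, wgt p₀ ω * (if Un ω ∈ Fam then 1 else 0)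
        = muF (1 - (1 - p₀)^j) Fam := by
  intro j
  induction j with
  | zero =>
      intro Fam
      have h0 : (1 : ℝ) - (1 - p₀)^0 = 0 := by ring
      rw [h0]
      have hmu0 : muF (0:ℝ) Fam = if (∅ : Finset X) ∈ Fam then 1 else 0 := by
        unfold muF
        rw [Finset.sum_congr rfl (fun S _ => mu_zero S)]
        exact Finset.sum_ite_eq' Fam ∅ (fun _ => 1)
      rw [hmu0, Fintype.sum_unique]
      by_cases h : (∅ : Finset X) ∈ Fam <;> simp [Un, wgt, h]
  | succ j ih =>
      intro Fam
      rw [sum_pi_split (fun ω => wgt p₀ ω * (if Un ω ∈ Fam then 1 else 0))]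
      have hW : ∀ W : Finset X,
          (∑ ρ : Fin j → Finset X,
            wgt p₀ (Fin.cons W ρ) * (if Un (Fin.cons W ρ) ∈ Fam then 1 else 0))
          = mu p₀ W * (∑ V : Finset X,
              mu (1-(1-p₀)^j) V * (if V ∪ W ∈ Fam then 1 else 0)) := by
        intro W
        have hterm : ∀ ρ : Fin j → Finset X,
            wgt p₀ (Fin.cons W ρ) * (if Un (Fin.cons W ρ) ∈ Fam then 1 else 0)
            = mu p₀ W * (wgt p₀ ρ *
                (if Un ρ ∈ Finset.univ.filter (fun V => V ∪ W ∈ Fam) then 1 else 0)) := by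
          intro ρ
          have hiff : (Un ρ ∈ Finset.univ.filter (fun V => V ∪ W ∈ Fam))
              = (W ∪ Un ρ ∈ Fam) := by
            simp [Finset.mem_filter, Finset.union_comm]
          rw [wgt_cons, Un_cons]
          simp only [hiff]
          ring
        rw [Finset.sum_congr rfl (fun ρ _ => hterm ρ), ← Finset.mul_sum]
        congr 1
        rw [ih (Finset.univ.filter (fun V => V ∪ W ∈ Fam))]
        rw [muF_filter]
      rw [Finset.sum_congr rfl (fun W _ => hW W), conv_step]
      congr 1
      rw [pow_succ]
      ring


noncomputable section

/-- candidate fragments for covering `S` -/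
def Cand (H : Finset (Finset X)) (W S : Finset X) : Finset (Finset X) :=
  (H.image (fun S' => S' \ W)).filter (fun t => t ⊆ S)

def minFrag (H : Finset (Finset X)) (W S : Finset X) : Finset X :=
  if h : (Cand H W S).Nonempty then
    (Finset.exists_min_image (Cand H W S) Finset.card h).choose
  else ∅

lemma cand_nonempty {H : Finset (Finset X)} {W S : Finset X} (hS : S ∈ H) :
    (Cand H W S).Nonempty := by
  refine ⟨S \ W, ?_⟩
  rw [Cand, Finset.mem_filter]
  exact ⟨Finset.mem_image_of_mem _ hS, Finset.sdiff_subset⟩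

lemma minFrag_mem {H : Finset (Finset X)} {W S : Finset X} (hS : S ∈ H) :
    minFrag H W S ∈ Cand H W S := by
  rw [minFrag, dif_pos (cand_nonempty hS)]
  exact (Finset.exists_min_image (Cand H W S) Finset.card (cand_nonempty hS)).choose_spec.1

lemma minFrag_min {H : Finset (Finset X)} {W S : Finset X} (hS : S ∈ H) :
    ∀ t ∈ Cand H W S, (minFrag H W S).card ≤ t.card := by
  rw [minFrag, dif_pos (cand_nonempty hS)]
  exact (Finset.exists_min_image (Cand H W S) Finset.card (cand_nonempty hS)).choose_spec.2

lemma minFrag_subset {H : Finset (Finset X)} {W S : Finset X} (hS : S ∈ H) :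
    minFrag H W S ⊆ S := by
  have := minFrag_mem (W := W) hS
  rw [Cand, Finset.mem_filter] at this
  exact this.2

lemma minFrag_witness {H : Finset (Finset X)} {W S : Finset X} (hS : S ∈ H) :
    ∃ Q ∈ H, Q \ W = minFrag H W S := by
  have := minFrag_mem (W := W) hS
  rw [Cand, Finset.mem_filter] at this
  obtain ⟨Q, hQ, hQe⟩ := Finset.mem_image.mp this.1
  exact ⟨Q, hQ, hQe⟩

lemma minFrag_disj {H : Finset (Finset X)} {W S : Finset X} (hS : S ∈ H) :
    Disjoint (minFrag H W S) W := by
  obtain ⟨Q, _, hQe⟩ := minFrag_witness (W := W) hS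
  rw [← hQe]
  exact Finset.sdiff_disjoint

/-- expensive cover pieces produced in one round -/
def Gset (k : ℕ) (H : Finset (Finset X)) (W : Finset X) : Finset (Finset X) :=
  (H.filter (fun S => k/2 < (minFrag H W S).card)).image (minFrag H W)

/-- fragments passed to the next round -/
def Hnext (k : ℕ) (H : Finset (Finset X)) (W : Finset X) : Finset (Finset X) :=
  (H.filter (fun S => (minFrag H W S).card ≤ k/2)).image (minFrag H W)

def cost (q : ℝ) (G : Finset (Finset X)) : ℝ := ∑ T ∈ G, q ^ T.card

def totCost (q : ℝ) : (j : ℕ) → ℕ → Finset (Finset X) → (Fin j → Finset X) → ℝ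
  | 0, _, _, _ => 0
  | j+1, k, H, ω => cost q (Gset k H (ω 0)) + totCost q j (k/2) (Hnext k H (ω 0)) (Fin.tail ω)

def Gacc : (j : ℕ) → ℕ → Finset (Finset X) → (Fin j → Finset X) → Finset (Finset X)
  | 0, _, _, _ => ∅
  | j+1, k, H, ω => Gset k H (ω 0) ∪ Gacc j (k/2) (Hnext k H (ω 0)) (Fin.tail ω)

@[simp] lemma totCost_zero (q : ℝ) (k : ℕ) (H : Finset (Finset X)) (ω : Fin 0 → Finset X) :
    totCost q 0 k H ω = 0 := rfl

@[simp] lemma totCost_succ (q : ℝ) (j k : ℕ) (H : Finset (Finset X)) (ω : Fin (j+1) → Finset X) :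
    totCost q (j+1) k H ω
      = cost q (Gset k H (ω 0)) + totCost q j (k/2) (Hnext k H (ω 0)) (Fin.tail ω) := rfl

@[simp] lemma Gacc_zero (k : ℕ) (H : Finset (Finset X)) (ω : Fin 0 → Finset X) :
    Gacc 0 k H ω = ∅ := rfl

@[simp] lemma Gacc_succ (j k : ℕ) (H : Finset (Finset X)) (ω : Fin (j+1) → Finset X) :
    Gacc (j+1) k H ω
      = Gset k H (ω 0) ∪ Gacc j (k/2) (Hnext k H (ω 0)) (Fin.tail ω) := rfl

lemma cost_nonneg {q : ℝ} (hq : 0 ≤ q) (G : Finset (Finset X)) : 0 ≤ cost q G :=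
  Finset.sum_nonneg fun T _ => pow_nonneg hq _

lemma totCost_nonneg {q : ℝ} (hq : 0 ≤ q) :
    ∀ (j k : ℕ) (H : Finset (Finset X)) (ω : Fin j → Finset X), 0 ≤ totCost q j k H ω := by
  intro j
  induction j with
  | zero => intro k H ω; simp
  | succ j ih =>
      intro k H ω
      have := ih (k/2) (Hnext k H (ω 0)) (Fin.tail ω)
      have h2 := cost_nonneg hq (Gset k H (ω 0)) (X := X)
      rw [totCost_succ]
      linarith

lemma cost_union_le {q : ℝ} (hq : 0 ≤ q) (G₁ G₂ : Finset (Finset X)) :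
    cost q (G₁ ∪ G₂) ≤ cost q G₁ + cost q G₂ := by
  unfold cost
  rw [← Finset.union_sdiff_self_eq_union, Finset.sum_union Finset.disjoint_sdiff]
  have : ∑ T ∈ G₂ \ G₁, q ^ T.card ≤ ∑ T ∈ G₂, q ^ T.card :=
    Finset.sum_le_sum_of_subset_of_nonneg (Finset.sdiff_subset)
      (fun T _ _ => pow_nonneg hq _)
  linarith

lemma cost_Gacc_le {q : ℝ} (hq : 0 ≤ q) :
    ∀ (j k : ℕ) (H : Finset (Finset X)) (ω : Fin j → Finset X),
      cost q (Gacc j k H ω) ≤ totCost q j k H ω := by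
  intro j
  induction j with
  | zero => intro k H ω; simp [cost]
  | succ j ih =>
      intro k H ω
      rw [Gacc_succ, totCost_succ]
      have h1 := cost_union_le hq (Gset k H (ω 0)) (Gacc j (k/2) (Hnext k H (ω 0)) (Fin.tail ω))
      have h2 := ih (k/2) (Hnext k H (ω 0)) (Fin.tail ω)
      linarith

lemma Hnext_card {k : ℕ} {H : Finset (Finset X)} {W : Finset X} :
    ∀ R ∈ Hnext k H W, R.card ≤ k/2 := by
  intro R hR
  obtain ⟨S, hS, rfl⟩ := Finset.mem_image.mp hR
  exact (Finset.mem_filter.mp hS).2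

lemma chainMain :
    ∀ (j k : ℕ) (H : Finset (Finset X)) (ω : Fin j → Finset X) (S : Finset X),
      (∀ R ∈ H, R.card ≤ k) → k < 2^j → (∃ R ∈ H, R ⊆ S) →
      (∃ T ∈ Gacc j k H ω, T ⊆ S) ∨ (∃ R ∈ H, R ⊆ Un ω) := by
  intro j
  induction j with
  | zero =>
      intro k H ω S hcard hk ⟨R, hR, hRS⟩
      right
      refine ⟨R, hR, ?_⟩
      have : R.card = 0 := Nat.le_antisymm (le_trans (hcard R hR) (by omega)) (Nat.zero_le _)
      rw [Finset.card_eq_zero.mp this]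
      exact Finset.empty_subset _
  | succ j ih =>
      intro k H ω S hcard hk ⟨R, hR, hRS⟩
      set W := ω 0 with hW
      by_cases hb : k/2 < (minFrag H W R).card
      · left
        refine ⟨minFrag H W R, ?_, (minFrag_subset hR).trans hRS⟩
        rw [Gacc_succ]
        apply Finset.mem_union_left
        exact Finset.mem_image_of_mem _ (Finset.mem_filter.mpr ⟨hR, hb⟩)
      · push_neg at hb
        have humem : minFrag H W R ∈ Hnext k H W :=
          Finset.mem_image_of_mem _ (Finset.mem_filter.mpr ⟨hR, hb⟩)
        have hk2 : k/2 < 2^j := by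
          rw [pow_succ] at hk
          omega
        have hUn : Un ω = W ∪ Un (Fin.tail ω) := by
          conv_lhs => rw [← Fin.cons_self_tail ω]
          exact Un_cons _ _
        rcases ih (k/2) (Hnext k H W) (Fin.tail ω) S Hnext_card hk2
            ⟨minFrag H W R, humem, (minFrag_subset hR).trans hRS⟩ with
          ⟨T, hT, hTS⟩ | ⟨R', hR', hR'U⟩
        · left
          exact ⟨T, by rw [Gacc_succ]; exact Finset.mem_union_right _ hT, hTS⟩
        · right
          obtain ⟨S'', hS'', rfl⟩ := Finset.mem_image.mp hR'
          have hS''H : S'' ∈ H := (Finset.mem_filter.mp hS'').1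
          obtain ⟨Q, hQ, hQe⟩ := minFrag_witness (W := W) hS''H
          refine ⟨Q, hQ, ?_⟩
          intro x hx
          by_cases hxW : x ∈ W
          · rw [hUn]; exact Finset.mem_union_left _ hxW
          · have : x ∈ Q \ W := Finset.mem_sdiff.mpr ⟨hx, hxW⟩
            rw [hQe] at this
            rw [hUn]
            exact Finset.mem_union_right _ (hR'U this)
lemma mem_Gset {k : ℕ} {H : Finset (Finset X)} {W T : Finset X} (h : T ∈ Gset k H W) :
    ∃ S ∈ H, minFrag H W S = T ∧ k/2 < T.card := by
  obtain ⟨S, hS, rfl⟩ := Finset.mem_image.mp h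
  have hf := Finset.mem_filter.mp hS
  exact ⟨S, hf.1, rfl, hf.2⟩

lemma Gset_sub_inter {k : ℕ} {H : Finset (Finset X)} {Z T S'' : Finset X}
    (hTZ : T ⊆ Z) (hT : T ∈ Gset k H (Z \ T)) (hS'' : S'' ∈ H) (hS''Z : S'' ⊆ Z) :
    T ⊆ S'' := by
  obtain ⟨S, hSH, hmf, _⟩ := mem_Gset hT
  have hTS : T ⊆ S := hmf ▸ minFrag_subset (W := Z \ T) hSH
  have hSWT : S'' \ (Z \ T) = S'' ∩ T := by
    ext x
    simp only [Finset.mem_sdiff, Finset.mem_inter]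
    constructor
    · rintro ⟨hx, hnx⟩
      refine ⟨hx, ?_⟩
      by_contra hxT
      exact hnx ⟨hS''Z hx, hxT⟩
    · rintro ⟨hx, hxT⟩
      exact ⟨hx, fun hc => hc.2 hxT⟩
  have hcand : S'' \ (Z \ T) ∈ Cand H (Z \ T) S := by
    rw [Cand, Finset.mem_filter]
    refine ⟨Finset.mem_image_of_mem _ hS'', ?_⟩
    rw [hSWT]
    exact Finset.inter_subset_right.trans hTS
  have hle : T.card ≤ (S'' ∩ T).card := by
    have h2 := minFrag_min (W := Z \ T) hSH _ hcand
    rw [hmf, hSWT] at h2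
    exact h2
  have heq : S'' ∩ T = T :=
    Finset.eq_of_subset_of_card_le Finset.inter_subset_right hle
  rw [← heq]
  exact Finset.inter_subset_left

lemma Gset_witness {k : ℕ} {H : Finset (Finset X)} {Z T : Finset X}
    (hTZ : T ⊆ Z) (hT : T ∈ Gset k H (Z \ T)) :
    ∃ Q ∈ H, Q ⊆ Z := by
  obtain ⟨S, hSH, hmf, _⟩ := mem_Gset hT
  obtain ⟨Q, hQ, hQe⟩ := minFrag_witness (W := Z \ T) hSH
  rw [hmf] at hQe
  refine ⟨Q, hQ, ?_⟩
  intro x hx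
  by_cases hxT : x ∈ T
  · exact hTZ hxT
  · have hxQT : x ∈ Q \ (Z \ T) → x ∈ T := fun hc => hQe ▸ hc
    by_contra hxZ
    exact hxT (hxQT (Finset.mem_sdiff.mpr ⟨hx, fun hc => hxZ (Finset.mem_sdiff.mp hc).1⟩))

lemma mu_sdiff_q {p₀ q : ℝ} (h0 : 0 < p₀) (h1 : p₀ < 1) {Z T : Finset X} (hTZ : T ⊆ Z) :
    mu p₀ (Z \ T) * q ^ T.card = mu p₀ Z * (q * (1 - p₀) / p₀) ^ T.card := by
  set n := Fintype.card X with hn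
  have hcZ : Z.card ≤ n := Finset.card_le_univ Z
  have hcT : T.card ≤ Z.card := Finset.card_le_card hTZ
  have hcs : (Z \ T).card = Z.card - T.card := Finset.card_sdiff_of_subset hTZ
  have he1 : n - (Z.card - T.card) = (n - Z.card) + T.card := by omega
  have he2 : Z.card = (Z.card - T.card) + T.card := by omega
  rw [mu, mu, hcs, he1, pow_add]
  rw [show p₀ ^ Z.card = p₀ ^ (Z.card - T.card) * p₀ ^ T.card by rw [← pow_add, ← he2]]
  rw [div_pow, mul_pow]
  have hp0 : (p₀ : ℝ) ^ T.card ≠ 0 := pow_ne_zero _ (ne_of_gt h0)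
  rw [← hn]
  rw [div_eq_mul_inv]
  have hinv : p₀ ^ T.card * (p₀ ^ T.card)⁻¹ = 1 := mul_inv_cancel₀ hp0
  linear_combination (-(p₀ ^ (Z.card - T.card) * (1 - p₀) ^ (n - Z.card) * (1 - p₀) ^ T.card * q ^ T.card)) * hinv

set_option maxHeartbeats 1000000 in
lemma count_le (p₀ q : ℝ) (h0 : 0 < p₀) (h1 : p₀ < 1) (hq : 0 ≤ q)
    (k : ℕ) (H : Finset (Finset X)) (hH : ∀ R ∈ H, R.card ≤ k) :
    ∑ W : Finset X, mu p₀ W * cost q (Gset k H W)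
      ≤ ∑ t ∈ Finset.Icc (k/2+1) k, (k.choose t : ℝ) * (q * (1 - p₀) / p₀) ^ t := by
  classical
  set r := q * (1 - p₀) / p₀ with hrdef
  have hr0 : 0 ≤ r := by
    apply div_nonneg (mul_nonneg hq (by linarith)) (le_of_lt h0)
  have step0 : ∑ W : Finset X, mu p₀ W * cost q (Gset k H W)
      = ∑ W : Finset X, ∑ T ∈ Gset k H W, mu p₀ W * q ^ T.card := by
    apply Finset.sum_congr rfl
    intro W _
    rw [cost, Finset.mul_sum]
  have step1 : ∑ W : Finset X, ∑ T ∈ Gset k H W, mu p₀ W * q ^ T.card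
      = ∑ x ∈ (Finset.univ : Finset (Finset X)).sigma (fun W => Gset k H W),
          mu p₀ x.1 * q ^ x.2.card :=
    Finset.sum_sigma' (Finset.univ : Finset (Finset X)) (fun W => Gset k H W)
      (fun W (T : Finset X) => mu p₀ W * q ^ T.card)
  rw [step0, step1]
  have step2 : ∑ x ∈ (Finset.univ : Finset (Finset X)).sigma (fun W => Gset k H W),
          mu p₀ x.1 * q ^ x.2.card
      = ∑ y ∈ (Finset.univ : Finset (Finset X)).sigma
          (fun Z => Z.powerset.filter (fun T => T ∈ Gset k H (Z \ T))),
          mu p₀ (y.1 \ y.2) * q ^ y.2.card := by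
    refine Finset.sum_nbij' (fun x => ⟨x.1 ∪ x.2, x.2⟩) (fun y => ⟨y.1 \ y.2, y.2⟩)
      ?_ ?_ ?_ ?_ ?_
    · rintro ⟨W, T⟩ hx
      simp only [Finset.mem_sigma, Finset.mem_univ, true_and] at hx ⊢
      have hdisj : Disjoint T W := by
        obtain ⟨S, hSH, hmf, _⟩ := mem_Gset hx
        exact hmf ▸ minFrag_disj (W := W) hSH
      have hWT : (W ∪ T) \ T = W := by
        rw [Finset.union_sdiff_right, Finset.sdiff_eq_self_iff_disjoint.mpr hdisj.symm]
      rw [Finset.mem_filter, Finset.mem_powerset]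
      exact ⟨Finset.subset_union_right, by rw [hWT]; exact hx⟩
    · rintro ⟨Z, T⟩ hy
      simp only [Finset.mem_sigma, Finset.mem_univ, true_and] at hy ⊢
      exact (Finset.mem_filter.mp hy).2
    · rintro ⟨W, T⟩ hx
      simp only [Finset.mem_sigma, Finset.mem_univ, true_and] at hx
      have hdisj : Disjoint T W := by
        obtain ⟨S, hSH, hmf, _⟩ := mem_Gset hx
        exact hmf ▸ minFrag_disj (W := W) hSH
      have hWT : (W ∪ T) \ T = W := by
        rw [Finset.union_sdiff_right, Finset.sdiff_eq_self_iff_disjoint.mpr hdisj.symm]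
      dsimp only
      rw [hWT]
    · rintro ⟨Z, T⟩ hy
      simp only [Finset.mem_sigma, Finset.mem_univ, true_and] at hy
      have hTZ : T ⊆ Z := Finset.mem_powerset.mp (Finset.mem_filter.mp hy).1
      dsimp only
      rw [Finset.sdiff_union_of_subset hTZ]
    · rintro ⟨W, T⟩ hx
      simp only [Finset.mem_sigma, Finset.mem_univ, true_and] at hx
      have hdisj : Disjoint T W := by
        obtain ⟨S, hSH, hmf, _⟩ := mem_Gset hx
        exact hmf ▸ minFrag_disj (W := W) hSH
      have hWT : (W ∪ T) \ T = W := by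
        rw [Finset.union_sdiff_right, Finset.sdiff_eq_self_iff_disjoint.mpr hdisj.symm]
      dsimp only
      rw [hWT]
  rw [step2]
  have step3 : ∑ y ∈ (Finset.univ : Finset (Finset X)).sigma
          (fun Z => Z.powerset.filter (fun T => T ∈ Gset k H (Z \ T))),
          mu p₀ (y.1 \ y.2) * q ^ y.2.card
      = ∑ Z : Finset X, mu p₀ Z *
          (∑ T ∈ Z.powerset.filter (fun T => T ∈ Gset k H (Z \ T)), r ^ T.card) := by
    rw [← Finset.sum_sigma' (Finset.univ : Finset (Finset X))
      (fun Z => Z.powerset.filter (fun T => T ∈ Gset k H (Z \ T)))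
      (fun Z (T : Finset X) => mu p₀ (Z \ T) * q ^ T.card)]
    apply Finset.sum_congr rfl
    intro Z _
    rw [Finset.mul_sum]
    apply Finset.sum_congr rfl
    intro T hT
    have hTZ : T ⊆ Z := Finset.mem_powerset.mp (Finset.mem_filter.mp hT).1
    exact mu_sdiff_q h0 h1 hTZ
  rw [step3]
  have inner_le : ∀ Z : Finset X,
      (∑ T ∈ Z.powerset.filter (fun T => T ∈ Gset k H (Z \ T)), r ^ T.card)
        ≤ ∑ t ∈ Finset.Icc (k/2+1) k, (k.choose t : ℝ) * r ^ t := by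
    intro Z
    set DZ := Z.powerset.filter (fun T => T ∈ Gset k H (Z \ T)) with hDZ
    rcases DZ.eq_empty_or_nonempty with hE | ⟨T₀, hT₀⟩
    · rw [hE]
      simp only [Finset.sum_empty]
      apply Finset.sum_nonneg
      intro t _
      exact mul_nonneg (Nat.cast_nonneg _) (pow_nonneg hr0 _)
    · have hT₀' := Finset.mem_filter.mp hT₀
      have hT₀Z : T₀ ⊆ Z := Finset.mem_powerset.mp hT₀'.1
      obtain ⟨Q₀, hQ₀H, hQ₀Z⟩ := Gset_witness hT₀Z hT₀'.2
      set I := (H.filter (fun S => S ⊆ Z)).inf id with hI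
      have hIQ : I ⊆ Q₀ := by
        have : I ≤ id Q₀ := Finset.inf_le (Finset.mem_filter.mpr ⟨hQ₀H, hQ₀Z⟩)
        exact this
      have hIk : I.card ≤ k := le_trans (Finset.card_le_card hIQ) (hH Q₀ hQ₀H)
      have hsub : DZ ⊆ (Finset.Icc (k/2+1) k).biUnion (fun t => Finset.powersetCard t I) := by
        intro T hT
        have hT' := Finset.mem_filter.mp hT
        have hTZ : T ⊆ Z := Finset.mem_powerset.mp hT'.1
        have hTI : T ⊆ I := by
          have : T ≤ (H.filter (fun S => S ⊆ Z)).inf id :=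
            Finset.le_inf (fun S'' hS'' => by
              have hmem := Finset.mem_filter.mp hS''
              exact Gset_sub_inter hTZ hT'.2 hmem.1 hmem.2)
          exact this
        have hcard1 : k/2 < T.card := by
          obtain ⟨S, hSH, hmf, hc⟩ := mem_Gset hT'.2
          exact hc
        have hcard2 : T.card ≤ k := le_trans (Finset.card_le_card hTI) hIk
        rw [Finset.mem_biUnion]
        exact ⟨T.card, Finset.mem_Icc.mpr ⟨by omega, hcard2⟩,
          Finset.mem_powersetCard.mpr ⟨hTI, rfl⟩⟩
      have hdisj : (↑(Finset.Icc (k/2+1) k) : Set ℕ).PairwiseDisjoint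
          (fun t => Finset.powersetCard t I) := by
        intro t1 _ t2 _ hne
        rw [Function.onFun, Finset.disjoint_left]
        intro T h1 h2
        exact hne ((Finset.mem_powersetCard.mp h1).2.symm.trans
          (Finset.mem_powersetCard.mp h2).2)
      calc ∑ T ∈ DZ, r ^ T.card
          ≤ ∑ T ∈ (Finset.Icc (k/2+1) k).biUnion (fun t => Finset.powersetCard t I),
              r ^ T.card :=
            Finset.sum_le_sum_of_subset_of_nonneg hsub (fun T _ _ => pow_nonneg hr0 _)
        _ = ∑ t ∈ Finset.Icc (k/2+1) k, ∑ T ∈ Finset.powersetCard t I, r ^ T.card :=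
            Finset.sum_biUnion hdisj
        _ ≤ ∑ t ∈ Finset.Icc (k/2+1) k, (k.choose t : ℝ) * r ^ t := by
            apply Finset.sum_le_sum
            intro t _
            have hcards : ∀ T ∈ Finset.powersetCard t I, r ^ T.card = r ^ t := by
              intro T hT
              rw [(Finset.mem_powersetCard.mp hT).2]
            rw [Finset.sum_congr rfl hcards, Finset.sum_const,
              Finset.card_powersetCard, nsmul_eq_mul]
            apply mul_le_mul_of_nonneg_right _ (pow_nonneg hr0 _)
            exact_mod_cast Nat.choose_le_choose t hIk
  calc ∑ Z : Finset X, mu p₀ Z *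
          (∑ T ∈ Z.powerset.filter (fun T => T ∈ Gset k H (Z \ T)), r ^ T.card)
      ≤ ∑ Z : Finset X, mu p₀ Z *
          (∑ t ∈ Finset.Icc (k/2+1) k, (k.choose t : ℝ) * r ^ t) := by
        apply Finset.sum_le_sum
        intro Z _
        exact mul_le_mul_of_nonneg_left (inner_le Z)
          (mu_nonneg (le_of_lt h0) (le_of_lt h1) Z)
    _ = ∑ t ∈ Finset.Icc (k/2+1) k, (k.choose t : ℝ) * r ^ t := by
        rw [← Finset.sum_mul, sum_mu, one_mul]
end

end PP

namespace PP
set_option linter.unusedSectionVars false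
set_option linter.unusedVariables false
variable {X : Type*} [Fintype X] [DecidableEq X]

lemma sum_choose_half (k : ℕ) (hk : 1 ≤ k) :
    (∑ t ∈ Finset.Icc (k/2+1) k, k.choose t) ≤ 2^(k-1) := by
  have hre : (∑ t ∈ Finset.Icc (k/2+1) k, k.choose t)
      = ∑ t ∈ Finset.Icc 0 (k - (k/2+1)), k.choose t := by
    refine Finset.sum_nbij' (fun t => k - t) (fun t => k - t) ?_ ?_ ?_ ?_ ?_
    · intro t ht
      rw [Finset.mem_Icc] at ht ⊢
      omega
    · intro t ht
      rw [Finset.mem_Icc] at ht ⊢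
      omega
    · intro t ht
      rw [Finset.mem_Icc] at ht
      omega
    · intro t ht
      rw [Finset.mem_Icc] at ht
      omega
    · intro t ht
      rw [Finset.mem_Icc] at ht
      exact (Nat.choose_symm ht.2).symm
  have hdisj : Disjoint (Finset.Icc (k/2+1) k) (Finset.Icc 0 (k - (k/2+1))) := by
    rw [Finset.disjoint_left]
    intro t h1 h2
    rw [Finset.mem_Icc] at h1 h2
    omega
  have hsub : (Finset.Icc (k/2+1) k) ∪ (Finset.Icc 0 (k - (k/2+1)))
      ⊆ Finset.range (k+1) := by
    intro t ht
    rw [Finset.mem_union, Finset.mem_Icc, Finset.mem_Icc] at ht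
    rw [Finset.mem_range]
    omega
  have h2 : (∑ t ∈ Finset.Icc (k/2+1) k, k.choose t)
      + (∑ t ∈ Finset.Icc 0 (k - (k/2+1)), k.choose t) ≤ 2^k := by
    rw [← Finset.sum_union hdisj]
    calc ∑ t ∈ (Finset.Icc (k/2+1) k) ∪ (Finset.Icc 0 (k - (k/2+1))), k.choose t
        ≤ ∑ t ∈ Finset.range (k+1), k.choose t :=
          Finset.sum_le_sum_of_subset hsub
      _ = 2^k := Nat.sum_range_choose k
  rw [← hre] at h2
  have hpk : 2^k = 2^(k-1) + 2^(k-1) := by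
    have h : k - 1 + 1 = k := Nat.succ_pred_eq_of_pos hk
    calc 2^k = 2^(k-1+1) := by rw [h]
      _ = 2^(k-1)*2 := pow_succ 2 (k-1)
      _ = 2^(k-1)+2^(k-1) := by ring
  omega

lemma f_bound {r : ℝ} (hr0 : 0 ≤ r) (hr : r ≤ 1/8) (k : ℕ) (hk : 1 ≤ k) :
    ∑ t ∈ Finset.Icc (k/2+1) k, (k.choose t : ℝ) * r ^ t ≤ (1/2:ℝ)^(k/2+3) := by
  have h18 : (0:ℝ) ≤ 1/8 := by norm_num
  have h181 : (1/8:ℝ) ≤ 1 := by norm_num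
  calc ∑ t ∈ Finset.Icc (k/2+1) k, (k.choose t : ℝ) * r ^ t
      ≤ ∑ t ∈ Finset.Icc (k/2+1) k, (k.choose t : ℝ) * (1/8:ℝ) ^ (k/2+1) := by
        apply Finset.sum_le_sum
        intro t ht
        have ht' := (Finset.mem_Icc.mp ht).1
        apply mul_le_mul_of_nonneg_left _ (Nat.cast_nonneg _)
        calc r ^ t ≤ (1/8:ℝ)^t := pow_le_pow_left₀ hr0 hr t
          _ ≤ (1/8:ℝ)^(k/2+1) := pow_le_pow_of_le_one h18 h181 ht'
    _ = (∑ t ∈ Finset.Icc (k/2+1) k, (k.choose t : ℝ)) * (1/8:ℝ)^(k/2+1) := by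
        rw [← Finset.sum_mul]
    _ ≤ (2:ℝ)^(k-1) * (1/8:ℝ)^(k/2+1) := by
        apply mul_le_mul_of_nonneg_right _ (pow_nonneg h18 _)
        have := sum_choose_half k hk
        calc (∑ t ∈ Finset.Icc (k/2+1) k, (k.choose t : ℝ))
            = ((∑ t ∈ Finset.Icc (k/2+1) k, k.choose t : ℕ) : ℝ) := by
              rw [Nat.cast_sum]
          _ ≤ ((2^(k-1) : ℕ) : ℝ) := by exact_mod_cast this
          _ = (2:ℝ)^(k-1) := by push_cast; ring
    _ ≤ (1/2:ℝ)^(k/2+3) := by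
        have he : (1/8:ℝ)^(k/2+1) = (1/2:ℝ)^(3*(k/2+1)) := by
          rw [pow_mul]
          norm_num
        rw [he]
        have hexp : 3*(k/2+1) = (k-1) + (3*(k/2+1) - (k-1)) := by omega
        rw [hexp, pow_add, ← mul_assoc]
        have hone : (2:ℝ)^(k-1) * (1/2:ℝ)^(k-1) = 1 := by
          rw [← mul_pow]
          norm_num
        rw [hone, one_mul]
        apply pow_le_pow_of_le_one (by norm_num) (by norm_num)
        omega

lemma numeric_step (k : ℕ) (hk : 2 ≤ k) :
    (1/2:ℝ)^(k/2+3) + (1/2:ℝ)^(k/2/2+3) ≤ (1/2:ℝ)^(k/2+3) + ((1/4:ℝ) - (1/2:ℝ)^(k/2+3)) →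
    True := fun _ => trivial

lemma wgt_nonneg {p₀ : ℝ} (h0 : 0 ≤ p₀) (h1 : p₀ ≤ 1) {j : ℕ} (ω : Fin j → Finset X) :
    0 ≤ wgt p₀ ω :=
  Finset.prod_nonneg fun i _ => mu_nonneg h0 h1 _

lemma sum_wgt (p₀ : ℝ) : ∀ j : ℕ, ∑ ω : Fin j → Finset X, wgt p₀ ω = 1 := by
  intro j
  induction j with
  | zero =>
      rw [Fintype.sum_unique]
      simp [wgt]
  | succ j ih =>
      rw [sum_pi_split (fun ω => wgt p₀ ω)]
      have : ∀ W : Finset X, ∑ ρ : Fin j → Finset X, wgt p₀ (Fin.cons W ρ)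
          = mu p₀ W := by
        intro W
        rw [Finset.sum_congr rfl (fun ρ _ => wgt_cons p₀ W ρ), ← Finset.mul_sum, ih, mul_one]
      rw [Finset.sum_congr rfl (fun W _ => this W), sum_mu]

lemma totCost_card_zero {q : ℝ} :
    ∀ (j : ℕ) (H : Finset (Finset X)) (ω : Fin j → Finset X),
      (∀ R ∈ H, R.card ≤ 0) → totCost q j 0 H ω = 0 := by
  intro j
  induction j with
  | zero => intro H ω _; rfl
  | succ j ih =>
      intro H ω hH
      rw [totCost_succ]
      have hG : Gset 0 H (ω 0) = ∅ := by
        rw [Gset, Finset.image_eq_empty, Finset.filter_eq_empty_iff]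
        intro S hS
        push_neg
        have h1 : (minFrag H (ω 0) S).card ≤ S.card :=
          Finset.card_le_card (minFrag_subset hS)
        have h2 := hH S hS
        omega
      rw [hG]
      have : cost q (∅ : Finset (Finset X)) = 0 := by simp [cost]
      rw [this, ih _ (Fin.tail ω) (fun R hR => by
        have := Hnext_card (k := 0) (H := H) (W := ω 0) R hR
        omega), add_zero]

lemma totCost_exp_le (p₀ q : ℝ) (h0 : 0 < p₀) (h1 : p₀ < 1) (hq : 0 ≤ q)
    (hr : q * (1 - p₀) / p₀ ≤ 1/8) :
    ∀ (j k : ℕ) (H : Finset (Finset X)), 1 ≤ k → (∀ R ∈ H, R.card ≤ k) →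
      ∑ ω : Fin j → Finset X, wgt p₀ ω * totCost q j k H ω
        ≤ 1/4 - (1/2:ℝ)^(k/2+3) := by
  have hr0 : 0 ≤ q * (1 - p₀) / p₀ :=
    div_nonneg (mul_nonneg hq (by linarith)) (le_of_lt h0)
  intro j
  induction j with
  | zero =>
      intro k H hk hH
      have : ∑ ω : Fin 0 → Finset X, wgt p₀ ω * totCost q 0 k H ω = 0 := by
        apply Finset.sum_eq_zero
        intro ω _
        rw [totCost_zero, mul_zero]
      rw [this]
      have : (1/2:ℝ)^(k/2+3) ≤ (1/2:ℝ)^3 :=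
        pow_le_pow_of_le_one (by norm_num) (by norm_num) (by omega)
      norm_num at this ⊢
      linarith
  | succ j ih =>
      intro k H hk hH
      rw [sum_pi_split (fun ω => wgt p₀ ω * totCost q (j+1) k H ω)]
      have hterm : ∀ (W : Finset X) (ρ : Fin j → Finset X),
          wgt p₀ (Fin.cons W ρ) * totCost q (j+1) k H (Fin.cons W ρ)
          = mu p₀ W * wgt p₀ ρ * cost q (Gset k H W)
            + mu p₀ W * (wgt p₀ ρ * totCost q j (k/2) (Hnext k H W) ρ) := by
        intro W ρ
        rw [wgt_cons, totCost_succ]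
        have e0 : (Fin.cons W ρ : Fin (j+1) → Finset X) 0 = W := Fin.cons_zero _ _
        have e1 : Fin.tail (Fin.cons W ρ : Fin (j+1) → Finset X) = ρ := Fin.tail_cons _ _
        rw [e0, e1]
        ring
      have hsplit : ∀ W : Finset X,
          (∑ ρ : Fin j → Finset X, wgt p₀ (Fin.cons W ρ) * totCost q (j+1) k H (Fin.cons W ρ))
          = mu p₀ W * cost q (Gset k H W)
            + mu p₀ W * (∑ ρ : Fin j → Finset X,
                wgt p₀ ρ * totCost q j (k/2) (Hnext k H W) ρ) := by
        intro W
        rw [Finset.sum_congr rfl (fun ρ _ => hterm W ρ), Finset.sum_add_distrib]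
        congr 1
        · rw [← Finset.sum_mul, ← Finset.mul_sum, sum_wgt p₀ j, mul_one]
        · rw [← Finset.mul_sum]
      rw [Finset.sum_congr rfl (fun W _ => hsplit W), Finset.sum_add_distrib]
      have hfirst : ∑ W : Finset X, mu p₀ W * cost q (Gset k H W) ≤ (1/2:ℝ)^(k/2+3) :=
        le_trans (count_le p₀ q h0 h1 hq k H hH) (f_bound hr0 hr k hk)
      by_cases hk2 : 2 ≤ k
      · have hIH : ∀ W : Finset X,
            (∑ ρ : Fin j → Finset X, wgt p₀ ρ * totCost q j (k/2) (Hnext k H W) ρ)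
              ≤ 1/4 - (1/2:ℝ)^(k/2/2+3) :=
          fun W => ih (k/2) (Hnext k H W) (by omega) Hnext_card
        have hsecond : ∑ W : Finset X, mu p₀ W * (∑ ρ : Fin j → Finset X,
              wgt p₀ ρ * totCost q j (k/2) (Hnext k H W) ρ)
            ≤ 1/4 - (1/2:ℝ)^(k/2/2+3) := by
          calc ∑ W : Finset X, mu p₀ W * (∑ ρ : Fin j → Finset X,
                wgt p₀ ρ * totCost q j (k/2) (Hnext k H W) ρ)
              ≤ ∑ W : Finset X, mu p₀ W * (1/4 - (1/2:ℝ)^(k/2/2+3)) := by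
                apply Finset.sum_le_sum
                intro W _
                exact mul_le_mul_of_nonneg_left (hIH W) (mu_nonneg h0.le h1.le W)
            _ = 1/4 - (1/2:ℝ)^(k/2/2+3) := by rw [← Finset.sum_mul, sum_mu, one_mul]
        have hkey : (1/2:ℝ)^(k/2+3) + (1/2:ℝ)^(k/2+3) ≤ (1/2:ℝ)^(k/2/2+3) := by
          have : (1/2:ℝ)^(k/2+3) + (1/2:ℝ)^(k/2+3) = (1/2:ℝ)^(k/2+2) * ((1/2)*2) := by
            rw [show k/2+3 = (k/2+2)+1 from rfl, pow_succ]
            ring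
          rw [this]
          norm_num
          apply pow_le_pow_of_le_one (by norm_num) (by norm_num)
          omega
        linarith
      · -- k = 1
        have hk1 : k = 1 := by omega
        subst hk1
        have hzero : ∀ W : Finset X,
            (∑ ρ : Fin j → Finset X, wgt p₀ ρ * totCost q j (1/2) (Hnext 1 H W) ρ) = 0 := by
          intro W
          apply Finset.sum_eq_zero
          intro ρ _
          rw [show (1:ℕ)/2 = 0 from rfl]
          rw [totCost_card_zero j (Hnext 1 H W) ρ (fun R hR => by
            have := Hnext_card (k := 1) (H := H) (W := W) R hR
            omega), mul_zero]
        have : ∑ W : Finset X, mu p₀ W * (∑ ρ : Fin j → Finset X,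
              wgt p₀ ρ * totCost q j (1/2) (Hnext 1 H W) ρ) = 0 := by
          apply Finset.sum_eq_zero
          intro W _
          rw [hzero W, mul_zero]
        rw [this, add_zero]
        norm_num at hfirst ⊢
        linarith

end PP

namespace PP
set_option linter.unusedSectionVars false
set_option linter.unusedVariables false
variable {X : Type*} [Fintype X] [DecidableEq X]

lemma exists_minimal_subset {F : Finset (Finset X)} {S : Finset X} (hS : S ∈ F) :
    ∃ R ∈ minimalsF F, R ⊆ S := by
  obtain ⟨M, hM, hmin⟩ := Finset.exists_minimal (s := F.filter (fun T => T ⊆ S))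
    ⟨S, Finset.mem_filter.mpr ⟨hS, le_refl _⟩⟩
  have hMF := (Finset.mem_filter.mp hM).1
  have hMS := (Finset.mem_filter.mp hM).2
  refine ⟨M, ?_, hMS⟩
  rw [minimalsF, Finset.mem_filter]
  refine ⟨hMF, fun T hT hTM => ?_⟩
  by_contra hne
  exact hne (le_antisymm hTM (hmin (Finset.mem_filter.mpr ⟨hT, hTM.trans hMS⟩) hTM))

lemma minimalsF_subset (F : Finset (Finset X)) : minimalsF F ⊆ F :=
  Finset.filter_subset _ F

lemma card_le_ell0 {F : Finset (Finset X)} {R : Finset X} (hR : R ∈ minimalsF F) :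
    R.card ≤ ell0 F :=
  Finset.le_sup hR

theorem pp_main (F : Finset (Finset X)) (q p : ℝ)
    (hup : ∀ S ∈ F, ∀ T : Finset X, S ⊆ T → T ∈ F)
    (hne : F.Nonempty) (hempty : ∅ ∉ F)
    (hp : p ∈ Set.Ioo (0:ℝ) 1) (hq : 0 < q)
    (h8 : 8 * q * ((Nat.log 2 (ell0 F) + 1 : ℕ) : ℝ) ≤ p)
    (hns : ¬ PSmall q F) :
    muF p F > 1/2 := by
  classical
  obtain ⟨hp0, hp1⟩ := hp
  set ℓ := ell0 F with hℓ
  set m := Nat.log 2 ℓ + 1 with hm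
  -- ℓ ≥ 1
  obtain ⟨S₀, hS₀⟩ := hne
  obtain ⟨R₀, hR₀, _⟩ := exists_minimal_subset hS₀
  have hR₀F : R₀ ∈ F := minimalsF_subset F hR₀
  have hR₀ne : R₀ ≠ ∅ := fun h => hempty (h ▸ hR₀F)
  have hl1 : 1 ≤ ℓ := le_trans
    (Finset.card_pos.mpr (Finset.nonempty_iff_ne_empty.mpr hR₀ne)) (card_le_ell0 hR₀)
  have hm1 : 1 ≤ m := by omega
  have hmR : (0:ℝ) < (m:ℝ) := by exact_mod_cast hm1
  -- p₀
  have h1p : (0:ℝ) < 1 - p := by linarith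
  set p₀ : ℝ := 1 - (1 - p) ^ ((m:ℝ)⁻¹) with hp₀def
  have hbpos : (0:ℝ) < (1 - p) ^ ((m:ℝ)⁻¹) := Real.rpow_pos_of_pos h1p _
  have hblt : (1 - p) ^ ((m:ℝ)⁻¹) < 1 :=
    Real.rpow_lt_one (le_of_lt h1p) (by linarith) (by positivity)
  have hp₀0 : 0 < p₀ := by rw [hp₀def]; linarith
  have hp₀1 : p₀ < 1 := by rw [hp₀def]; linarith
  have hpow : (1 - p₀) ^ m = 1 - p := by
    rw [hp₀def]
    have : (1:ℝ) - (1 - (1 - p) ^ ((m:ℝ)⁻¹)) = (1 - p) ^ ((m:ℝ)⁻¹) := by ring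
    rw [this, ← Real.rpow_natCast ((1 - p) ^ ((m:ℝ)⁻¹)) m, ← Real.rpow_mul (le_of_lt h1p)]
    rw [inv_mul_cancel₀ (Nat.cast_ne_zero.mpr (by omega : m ≠ 0))]
    exact Real.rpow_one _
  have hpm : p ≤ (m:ℝ) * p₀ := by
    have hb := one_add_mul_le_pow (a := -p₀) (by linarith) m
    rw [show (1:ℝ) + -p₀ = 1 - p₀ by ring] at hb
    rw [hpow] at hb
    have : (1:ℝ) + (m:ℝ) * -p₀ = 1 - (m:ℝ)*p₀ := by ring
    rw [this] at hb
    linarith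
  clear_value p₀
  have hrle : q * (1 - p₀) / p₀ ≤ 1/8 := by
    have h8q : 8 * q ≤ p₀ := by
      have h1 : 8 * q * (m:ℝ) ≤ (m:ℝ) * p₀ := le_trans h8 hpm
      nlinarith
    rw [div_le_iff₀ hp₀0]
    have hqp₀ : 0 ≤ q * p₀ := mul_nonneg (le_of_lt hq) hp₀0.le
    have hexp : q * (1 - p₀) = q - q * p₀ := by ring
    rw [hexp]
    linarith
  -- the failure bound
  set H₀ := minimalsF F with hH₀
  have hsizes : ∀ R ∈ H₀, R.card ≤ ℓ := fun R hR => card_le_ell0 hR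
  have hlm : ℓ < 2 ^ m := Nat.lt_pow_succ_log_self (by norm_num) ℓ
  have hpoint : ∀ ω : Fin m → Finset X,
      (if Un ω ∈ Finset.univ \ F then (1:ℝ) else 0) ≤ 2 * totCost q m ℓ H₀ ω := by
    intro ω
    by_cases hU : Un ω ∈ F
    · rw [if_neg (fun hc => (Finset.mem_sdiff.mp hc).2 hU)]
      have := totCost_nonneg (le_of_lt hq) m ℓ H₀ ω
      linarith
    · rw [if_pos (Finset.mem_sdiff.mpr ⟨Finset.mem_univ _, hU⟩)]
      have hcover : IsCover (Gacc m ℓ H₀ ω) F := by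
        intro S hS
        obtain ⟨R, hR, hRS⟩ := exists_minimal_subset hS
        rcases chainMain m ℓ H₀ ω S hsizes hlm ⟨R, hR, hRS⟩ with h | ⟨R', hR', hR'U⟩
        · exact h
        · exact absurd (hup R' (minimalsF_subset F hR') (Un ω) hR'U) hU
      have hgt : 1/2 < cost q (Gacc m ℓ H₀ ω) := by
        by_contra hle
        push_neg at hle
        exact hns ⟨Gacc m ℓ H₀ ω, hcover, hle⟩
      have := cost_Gacc_le (le_of_lt hq) m ℓ H₀ ω
      linarith
  have hdist : ∑ ω : Fin m → Finset X, wgt p₀ ω *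
        (if Un ω ∈ Finset.univ \ F then (1:ℝ) else 0)
      = 1 - muF p F := by
    rw [unionDist p₀ m (Finset.univ \ F), hpow]
    rw [show (1:ℝ) - (1 - p) = p by ring]
    exact muF_compl p F
  have hEbound : ∑ ω : Fin m → Finset X, wgt p₀ ω * totCost q m ℓ H₀ ω
      ≤ 1/4 - (1/2:ℝ)^(ℓ/2+3) :=
    totCost_exp_le p₀ q hp₀0 hp₀1 (le_of_lt hq) hrle m ℓ H₀ hl1 hsizes
  have hchain : 1 - muF p F ≤ 2 * (1/4 - (1/2:ℝ)^(ℓ/2+3)) := by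
    rw [← hdist]
    calc ∑ ω : Fin m → Finset X, wgt p₀ ω *
          (if Un ω ∈ Finset.univ \ F then (1:ℝ) else 0)
        ≤ ∑ ω : Fin m → Finset X, wgt p₀ ω * (2 * totCost q m ℓ H₀ ω) := by
          apply Finset.sum_le_sum
          intro ω _
          exact mul_le_mul_of_nonneg_left (hpoint ω) (wgt_nonneg hp₀0.le hp₀1.le ω)
      _ = 2 * ∑ ω : Fin m → Finset X, wgt p₀ ω * totCost q m ℓ H₀ ω := by
          rw [Finset.mul_sum]
          apply Finset.sum_congr rfl
          intro ω _
          ring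
      _ ≤ 2 * (1/4 - (1/2:ℝ)^(ℓ/2+3)) := by linarith
  have hpos : (0:ℝ) < (1/2:ℝ)^(ℓ/2+3) := by positivity
  rw [gt_iff_lt]
  linarith

end PP

/-- **Lemma (basic bound).** For `∅ ≠ A ⊆ B ⊆ 2^X` with `∅ ∉ A` and `p ∈ (0,1)`, if
`p > 8 · q(⟨A⟩) · log₂(2 ℓ₀(⟨A⟩))` then `P(X_p ∈ A | X_p ∈ B) > (1/2) · r_{A,B}(p)`,
where `P(X_p ∈ A | X_p ∈ B) = μ_p(A)/μ_p(B)`. -/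
theorem basic_bound (X : Type) [Fintype X] [DecidableEq X] [Nonempty X]
    (A B : Finset (Finset X)) (hA : A ≠ ∅) (hAB : A ⊆ B) (hnt : ∅ ∉ A)
    (p : ℝ) (hp : p ∈ Set.Ioo (0 : ℝ) 1)
    (hbig : p > 8 * qThr (upClos A) * Real.logb 2 (2 * (ell0 (upClos A) : ℝ))) :
    muF p A / muF p B > (1 / 2) * rAB A B p := by
  classical
  obtain ⟨hp0, hp1⟩ := hp
  have hAne : A.Nonempty := Finset.nonempty_iff_ne_empty.mpr hA
  have hAF : A ⊆ upClos A := by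
    intro S hS
    rw [upClos, Finset.mem_filter]
    exact ⟨Finset.mem_univ _, S, hS, le_refl _⟩
  have hFne : (upClos A).Nonempty := hAne.mono hAF
  have hup : ∀ S ∈ upClos A, ∀ T : Finset X, S ⊆ T → T ∈ upClos A := by
    intro S hS T hST
    rw [upClos, Finset.mem_filter] at hS ⊢
    obtain ⟨-, S', hS', hsub⟩ := hS
    exact ⟨Finset.mem_univ _, S', hS', hsub.trans hST⟩
  have hemptyF : ∅ ∉ upClos A := by
    intro h
    rw [upClos, Finset.mem_filter] at h
    obtain ⟨-, S', hS', hsub⟩ := h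
    rw [Finset.subset_empty] at hsub
    exact hnt (hsub ▸ hS')
  set ℓ := ell0 (upClos A) with hℓ
  -- ℓ ≥ 1
  obtain ⟨S₀, hS₀⟩ := id hFne
  obtain ⟨R₀, hR₀, -⟩ := PP.exists_minimal_subset hS₀
  have hR₀F : R₀ ∈ upClos A := PP.minimalsF_subset _ hR₀
  have hR₀ne : R₀ ≠ ∅ := fun h => hemptyF (h ▸ hR₀F)
  have hl1 : 1 ≤ ℓ := le_trans
    (Finset.card_pos.mpr (Finset.nonempty_iff_ne_empty.mpr hR₀ne)) (PP.card_le_ell0 hR₀)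
  have hlR : (1:ℝ) ≤ (ℓ:ℝ) := by exact_mod_cast hl1
  set L := Real.logb 2 (2 * (ℓ:ℝ)) with hL
  have hLsplit : L = 1 + Real.logb 2 (ℓ:ℝ) := by
    rw [hL, Real.logb_mul (by norm_num) (by positivity)]
    rw [Real.logb_self_eq_one (by norm_num)]
  have hlogl : (0:ℝ) ≤ Real.logb 2 (ℓ:ℝ) := Real.logb_nonneg (by norm_num) hlR
  have hL1 : (1:ℝ) ≤ L := by rw [hLsplit]; linarith
  have hL0 : (0:ℝ) < L := by linarith
  set m := Nat.log 2 ℓ + 1 with hm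
  have hmL : (m:ℝ) ≤ L := by
    have h2 : ((2:ℕ)^(Nat.log 2 ℓ) : ℝ) ≤ (ℓ:ℝ) := by
      exact_mod_cast Nat.pow_log_le_self 2 (by omega : ℓ ≠ 0)
    have h3 : Real.logb 2 ((2:ℝ)^(Nat.log 2 ℓ)) ≤ Real.logb 2 (ℓ:ℝ) := by
      apply (Real.logb_le_logb (by norm_num) (by positivity) (by positivity)).mpr
      exact_mod_cast h2
    rw [Real.logb_pow, Real.logb_self_eq_one (by norm_num), mul_one] at h3
    rw [hLsplit, hm]
    push_cast
    linarith
  set q' := p / (8 * L) with hq'def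
  have hq'0 : 0 < q' := by
    rw [hq'def]
    positivity
  by_cases hsm : PSmall q' (upClos A)
  · exfalso
    have hq'1 : q' ≤ 1 := by
      rw [hq'def]
      have h8L : (8:ℝ) ≤ 8 * L := by linarith
      have : p / (8 * L) ≤ p / 8 := by
        apply div_le_div_of_nonneg_left (le_of_lt hp0) (by norm_num) h8L
      linarith
    have hmem : q' ∈ {x : ℝ | x ∈ Set.Icc (0:ℝ) 1 ∧ PSmall x (upClos A)} :=
      ⟨⟨le_of_lt hq'0, hq'1⟩, hsm⟩
    have hbdd : BddAbove {x : ℝ | x ∈ Set.Icc (0:ℝ) 1 ∧ PSmall x (upClos A)} :=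
      ⟨1, fun x hx => hx.1.2⟩
    have hle : q' ≤ qThr (upClos A) := le_csSup hbdd hmem
    have : 8 * q' * L = p := by
      rw [hq'def]
      field_simp
    have hcontr : 8 * qThr (upClos A) * L ≥ p := by
      rw [← this]
      have := mul_le_mul_of_nonneg_right
        (mul_le_mul_of_nonneg_left hle (by norm_num : (0:ℝ) ≤ 8)) (le_of_lt hL0)
      linarith
    linarith [hbig]
  · have h8 : 8 * q' * ((Nat.log 2 (ell0 (upClos A)) + 1 : ℕ) : ℝ) ≤ p := by
      have he : 8 * q' * (m:ℝ) = p * (m:ℝ) / L := by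
        rw [hq'def]
        field_simp
      have hle2 : p * (m:ℝ) / L ≤ p := by
        rw [div_le_iff₀ hL0]
        have : p * (m:ℝ) ≤ p * L := mul_le_mul_of_nonneg_left hmL (le_of_lt hp0)
        linarith
      rw [← hm, he]
      exact hle2
    have hbigF : muF p (upClos A) > 1/2 :=
      PP.pp_main (upClos A) q' p hup hFne hemptyF ⟨hp0, hp1⟩ hq'0 h8 hsm
    -- final algebra
    have hA0 : 0 < muF p A := PP.muF_pos hp0 hp1 hAne
    have hB0 : 0 < muF p B :=
      lt_of_lt_of_le hA0 (PP.muF_mono (le_of_lt hp0) (le_of_lt hp1) hAB)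
    have hC0 : 0 < muF p (upClos A) := by linarith
    rw [rAB, gt_iff_lt, div_div, div_mul_div_comm, one_mul]
    apply div_lt_div_of_pos_left hA0 hB0
    nlinarith
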